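/- arXiv:2602.14859 — 4 statements merged into one kernel-verified Lean document; each statement's English description precedes it below -/
import Mathlib

section
/- Let f(z) = ∑_{n≥1} a_n z^n be a power series with nonnegative real coefficients, a_0 = 0, a_1 = 1, and radius of convergence r with 0 < r < 1. Then for every integer i ≥ 2 and every real x with 0 ≤ x < r^(1/2), we have f(x^i) ≤ f(x^2)^(i/2). -/
/-!
Write `f t = ∑ aₙ tⁿ` and `0 ≤ x < √r < 1`. Since `a₀ = 0` and `0 ≤ c ≤ 1` give `cⁿ ≤ c` for every
contributing `n`, we get `f (c t) ≤ c f t`; with `c = x^(i-2)` and `t = x²` this is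
`f (xⁱ) ≤ x^(i-2) f (x²)`. Since `a₁ = 1`, also `x² ≤ f (x²)`, so `x^(i-2) = (x²)^((i-2)/2)` is at most
`f (x²)^((i-2)/2)`, and multiplying the two bounds gives `f (x²)^(i/2)`.
-/

section PowerSeries

variable {a : ℕ → ℝ} {c t : ℝ}

theorem tsum_mul_mul_pow_le_mul_tsum (ha : ∀ n, 0 ≤ a n) (ha0 : a 0 = 0) (hc0 : 0 ≤ c)
    (hc1 : c ≤ 1) (ht : 0 ≤ t) (hs : Summable fun n => a n * t ^ n) :
    ∑' n, a n * (c * t) ^ n ≤ c * ∑' n, a n * t ^ n := by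
  have hterm : ∀ n, a n * (c * t) ^ n ≤ c * (a n * t ^ n) := by
    intro n
    rcases Nat.eq_zero_or_pos n with rfl | hn
    · simp [ha0]
    · rw [mul_pow, mul_left_comm]
      exact mul_le_mul_of_nonneg_right (pow_le_of_le_one hc0 hc1 hn.ne')
        (mul_nonneg (ha n) (pow_nonneg ht n))
  have hs' : Summable fun n => a n * (c * t) ^ n :=
    (hs.mul_left c).of_nonneg_of_le (fun n => mul_nonneg (ha n) (pow_nonneg (mul_nonneg hc0 ht) n))
      hterm
  rw [← tsum_mul_left]
  exact hs'.tsum_le_tsum hterm (hs.mul_left c)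

theorem le_tsum_mul_pow (ha : ∀ n, 0 ≤ a n) (ha1 : a 1 = 1) (ht : 0 ≤ t)
    (hs : Summable fun n => a n * t ^ n) :
    t ≤ ∑' n, a n * t ^ n := by
  simpa [ha1] using hs.le_tsum 1 fun n _ => mul_nonneg (ha n) (pow_nonneg ht n)

end PowerSeries

theorem stmt_3_general (a : ℕ → ℝ) (ha : ∀ n, 0 ≤ a n) (ha0 : a 0 = 0) (ha1 : a 1 = 1)
    (r : ℝ) (hr1 : r < 1)
    (hconv : ∀ x : ℝ, |x| < r → Summable (fun n => a n * x ^ n)) :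
    ∀ i : ℕ, 2 ≤ i → ∀ x : ℝ, 0 ≤ x → x < r ^ ((1 : ℝ) / 2) →
      (∑' n, a n * (x ^ i) ^ n) ≤ (∑' n, a n * (x ^ 2) ^ n) ^ ((i : ℝ) / 2) := by
  intro i hi x hx hxr
  rw [← Real.sqrt_eq_rpow, Real.lt_sqrt hx] at hxr
  have hx1 : x ≤ 1 := ((sq_lt_one_iff₀ hx).1 (hxr.trans hr1)).le
  have hs : Summable fun n => a n * (x ^ 2) ^ n := hconv _ (by rwa [abs_of_nonneg (sq_nonneg x)])
  have hi' : (2 : ℝ) ≤ i := by exact_mod_cast hi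
  set S := ∑' n, a n * (x ^ 2) ^ n
  have hxS : x ^ 2 ≤ S := le_tsum_mul_pow ha ha1 (sq_nonneg x) hs
  have hscale : ∑' n, a n * (x ^ i) ^ n ≤ x ^ (i - 2) * S := by
    have h := tsum_mul_mul_pow_le_mul_tsum ha ha0 (pow_nonneg hx (i - 2)) (pow_le_one₀ hx hx1)
      (sq_nonneg x) hs
    rwa [← pow_add, Nat.sub_add_cancel hi] at h
  have hpow : x ^ (i - 2) ≤ S ^ (((i : ℝ) - 2) / 2) :=
    calc x ^ (i - 2) = (x ^ 2) ^ (((i : ℝ) - 2) / 2) := by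
          rw [← Real.rpow_natCast, ← Real.rpow_natCast x 2, ← Real.rpow_mul hx]
          push_cast [Nat.cast_sub hi]
          ring_nf
      _ ≤ S ^ (((i : ℝ) - 2) / 2) :=
          Real.rpow_le_rpow (sq_nonneg x) hxS (by linarith)
  have hS : 0 ≤ S := (sq_nonneg x).trans hxS
  calc ∑' n, a n * (x ^ i) ^ n ≤ x ^ (i - 2) * S := hscale
    _ ≤ S ^ (((i : ℝ) - 2) / 2) * S := mul_le_mul_of_nonneg_right hpow hS
    _ = S ^ ((i : ℝ) / 2) := by
      rw [← Real.rpow_add_one' hS (by linarith)]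
      ring_nf

theorem stmt_3 (a : ℕ → ℝ) (ha : ∀ n, 0 ≤ a n) (ha0 : a 0 = 0) (ha1 : a 1 = 1)
    (r : ℝ) (hr0 : 0 < r) (hr1 : r < 1)
    (hconv : ∀ x : ℝ, |x| < r → Summable (fun n => a n * x ^ n))
    (hdiv : ∀ x : ℝ, r < x → ¬ Summable (fun n => a n * x ^ n)) :
    ∀ i : ℕ, 2 ≤ i → ∀ x : ℝ, 0 ≤ x → x < r ^ ((1 : ℝ) / 2) →
      (∑' n, a n * (x ^ i) ^ n) ≤ (∑' n, a n * (x ^ 2) ^ n) ^ ((i : ℝ) / 2) :=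
  stmt_3_general a ha ha0 ha1 r hr1 hconv
end

section
/- Let B and C be formal power series with zero constant term satisfying B = z(1 + B^2) and C = z(1 + C^4/(1 - C^2)) (equivalently (1 - C^2)·C = z·((1 - C^2) + C^4)). Then B - C = C^3/(1 - C^2) = C^3 + C^5 + C^7 + ⋯; in particular every coefficient of C is at most the corresponding coefficient of B. -/
/-!
Clearing denominators, `B (1 - C²)` satisfies the equation `y (1 - C²) = X ((1 - C²)² + y²)`,
which `C` satisfies as well; for two solutions `(y₁ - y₂)(1 - C² - X (y₁ + y₂)) = 0`, and the
second factor is a unit, so `B (1 - C²) = C`.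
Hence `B - C = C² B`, and the comparison of coefficients follows once `B` and `C` have
nonnegative coefficients. Both are of the form `X · g` where the coefficients of `g` up to degree
`n` are nonnegative as soon as those of the series itself are: `g = 1 + B²` and `g = 1 + C³ B`.
-/

open PowerSeries

namespace PowerSeries

section Nonneg

variable {R : Type*} [Semiring R] [PartialOrder R]

def CoeffNonnegUpTo (n : ℕ) (f : R⟦X⟧) : Prop := ∀ m ≤ n, 0 ≤ coeff m f

theorem coeffNonnegUpTo_of_eq_X_mul {f g : R⟦X⟧} (h : f = X * g)
    (hg : ∀ n, CoeffNonnegUpTo n f → CoeffNonnegUpTo n g) (n : ℕ) : CoeffNonnegUpTo n f := by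
  induction n with
  | zero =>
    intro m hm
    rw [Nat.le_zero.mp hm, h, coeff_zero_X_mul]
  | succ n ih =>
    intro m hm
    rcases m with _ | m
    · rw [h, coeff_zero_X_mul]
    · rw [h, coeff_succ_X_mul]
      exact hg n ih m (by omega)

variable [IsOrderedRing R]

theorem coeffNonnegUpTo_one {n : ℕ} : CoeffNonnegUpTo n (1 : R⟦X⟧) := by
  intro m _
  rw [coeff_one]
  split_ifs
  exacts [zero_le_one, le_rfl]

namespace CoeffNonnegUpTo

variable {n : ℕ} {f g : R⟦X⟧}

theorem add (hf : CoeffNonnegUpTo n f) (hg : CoeffNonnegUpTo n g) :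
    CoeffNonnegUpTo n (f + g) := fun m hm => by
  rw [map_add]
  exact add_nonneg (hf m hm) (hg m hm)

theorem mul (hf : CoeffNonnegUpTo n f) (hg : CoeffNonnegUpTo n g) :
    CoeffNonnegUpTo n (f * g) := fun m hm => by
  rw [coeff_mul]
  refine Finset.sum_nonneg fun p hp => ?_
  rw [Finset.HasAntidiagonal.mem_antidiagonal] at hp
  exact mul_nonneg (hf p.1 (by omega)) (hg p.2 (by omega))

theorem pow (hf : CoeffNonnegUpTo n f) (k : ℕ) : CoeffNonnegUpTo n (f ^ k) := by
  induction k with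
  | zero => simpa using coeffNonnegUpTo_one
  | succ k ih => simpa [pow_succ] using ih.mul hf

end CoeffNonnegUpTo

end Nonneg

section Equations

variable {R : Type*} [CommRing R] {B C : R⟦X⟧}

theorem mul_one_sub_sq_eq (hC0 : constantCoeff C = 0) (hB : B = X * (1 + B ^ 2))
    (hC : (1 - C ^ 2) * C = X * ((1 - C ^ 2) + C ^ 4)) :
    B * (1 - C ^ 2) = C := by
  have key : (B * (1 - C ^ 2) - C) * (1 - C ^ 2 - X * (B * (1 - C ^ 2) + C)) = 0 := by
    linear_combination (1 - C ^ 2) ^ 2 * hB - hC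
  have hunit : IsUnit (1 - C ^ 2 - X * (B * (1 - C ^ 2) + C)) := by
    simp [isUnit_iff_constantCoeff, hC0]
  exact sub_eq_zero.mp (hunit.mul_left_eq_zero.mp key)

theorem eq_X_mul_one_add_pow_three_mul (hC0 : constantCoeff C = 0)
    (hC : (1 - C ^ 2) * C = X * ((1 - C ^ 2) + C ^ 4)) (hBC : B * (1 - C ^ 2) = C) :
    C = X * (1 + C ^ 3 * B) := by
  have key : (C - X * (1 + C ^ 3 * B)) * (1 - C ^ 2) = 0 := by
    linear_combination hC - X * C ^ 3 * hBC
  have hunit : IsUnit (1 - C ^ 2) := by simp [isUnit_iff_constantCoeff, hC0]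
  exact sub_eq_zero.mp (hunit.mul_left_eq_zero.mp key)

end Equations

end PowerSeries

theorem stmt_5_general (B C : PowerSeries ℝ)
    (hC0 : constantCoeff C = 0)
    (hB : B = X * (1 + B ^ 2))
    (hC : (1 - C ^ 2) * C = X * ((1 - C ^ 2) + C ^ 4)) :
    (1 - C ^ 2) * (B - C) = C ^ 3 ∧
    (∀ n : ℕ, coeff n C ≤ coeff n B) := by
  have hBC : B * (1 - C ^ 2) = C := mul_one_sub_sq_eq hC0 hB hC
  refine ⟨by linear_combination hBC, fun n => ?_⟩
  have hB_nonneg : ∀ n, CoeffNonnegUpTo n B :=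
    coeffNonnegUpTo_of_eq_X_mul hB fun _ hB' => coeffNonnegUpTo_one.add (hB'.pow 2)
  have hC_nonneg : ∀ n, CoeffNonnegUpTo n C :=
    coeffNonnegUpTo_of_eq_X_mul (eq_X_mul_one_add_pow_three_mul hC0 hC hBC)
      fun n hC' => coeffNonnegUpTo_one.add ((hC'.pow 3).mul (hB_nonneg n))
  have hdiff : B - C = C ^ 2 * B := by linear_combination hBC
  have h : 0 ≤ coeff n (B - C) := by
    rw [hdiff]
    exact ((hC_nonneg n).pow 2).mul (hB_nonneg n) n le_rfl
  rwa [map_sub, sub_nonneg] at h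

theorem stmt_5 (B C : PowerSeries ℝ)
    (hB0 : constantCoeff B = 0) (hC0 : constantCoeff C = 0)
    (hB : B = X * (1 + B ^ 2))
    (hC : (1 - C ^ 2) * C = X * ((1 - C ^ 2) + C ^ 4)) :
    (1 - C ^ 2) * (B - C) = C ^ 3 ∧
    (∀ n : ℕ, coeff n C ≤ coeff n B) :=
  stmt_5_general B C hC0 hB hC
end

section
/- Let B and C be as above (ordinary generating functions of full binary ordered trees and of ordered trees with all internal outdegrees even and at least 4, respectively). Eliminating z between B = z(1+B^2) and C = z(1 + C^4/(1-C^2)) yields the identity (C^2 + C·B - 1)·(C^2·B + C - B) = 0 in the ring of formal power series, and since C^2 + C·B - 1 is a unit, B = C/(1 - C^2). -/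
/-! Multiplying the equation of `B` by `(1 - C²) + C⁴` and that of `C` by `1 + B²` eliminates `z`,
and the resulting polynomial relation factors as `(C² + CB - 1)(C²B + C - B) = 0`. The first factor
has constant term `-1`, so it is a unit and the second factor vanishes. -/

open PowerSeries

theorem sq_add_mul_sub_one_mul_eq_zero {R : Type*} [CommRing R] {z B C : R}
    (hB : B = z * (1 + B ^ 2)) (hC : (1 - C ^ 2) * C = z * ((1 - C ^ 2) + C ^ 4)) :
    (C ^ 2 + C * B - 1) * (C ^ 2 * B + C - B) = 0 := by
  linear_combination ((1 : R) - C ^ 2 + C ^ 4) * hB - (1 + B ^ 2) * hC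

theorem PowerSeries.isUnit_sq_add_mul_sub_one {R : Type*} [CommRing R] {B C : R⟦X⟧}
    (hC0 : constantCoeff C = 0) : IsUnit (C ^ 2 + C * B - 1) := by
  rw [isUnit_iff_constantCoeff]
  simp [hC0]

theorem stmt_6_general (B C : PowerSeries ℝ)
    (hC0 : constantCoeff C = 0)
    (hB : B = X * (1 + B ^ 2))
    (hC : (1 - C ^ 2) * C = X * ((1 - C ^ 2) + C ^ 4)) :
    (C ^ 2 + C * B - 1) * (C ^ 2 * B + C - B) = 0 ∧
    IsUnit (C ^ 2 + C * B - 1) ∧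
    B * (1 - C ^ 2) = C := by
  have hprod := sq_add_mul_sub_one_mul_eq_zero hB hC
  have hunit : IsUnit (C ^ 2 + C * B - 1) := isUnit_sq_add_mul_sub_one hC0
  have hfactor : C ^ 2 * B + C - B = 0 := hunit.mul_right_eq_zero.mp hprod
  exact ⟨hprod, hunit, by linear_combination -hfactor⟩

theorem stmt_6 (B C : PowerSeries ℝ)
    (hB0 : constantCoeff B = 0) (hC0 : constantCoeff C = 0)
    (hB : B = X * (1 + B ^ 2))
    (hC : (1 - C ^ 2) * C = X * ((1 - C ^ 2) + C ^ 4)) :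
    (C ^ 2 + C * B - 1) * (C ^ 2 * B + C - B) = 0 ∧
    IsUnit (C ^ 2 + C * B - 1) ∧
    B * (1 - C ^ 2) = C :=
  stmt_6_general B C hC0 hB hC
end

section
/- Let T(z) be a formal power series with zero constant term satisfying T(z) = (z/2)·exp(∑_{j≥1} T(z^j)/j) + (z/2)·exp(∑_{j≥1} (-1)^j T(z^j)/j) - (z/2)·(T(z)^2 + T(z^2)). Then the coefficients of T are uniquely determined by this equation, and [z^1]T = 1, [z^n]T = 0 for even n, and [z^5]T = 1. -/
open PowerSeries

/-- Substitution `z ↦ z^j` (for `j ≥ 1`) into a formal power series: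
`[z^n] T(z^j) = [z^{n/j}] T` if `j ∣ n`, and `0` otherwise. -/
noncomputable def substPow (j : ℕ) (T : PowerSeries ℚ) : PowerSeries ℚ :=
  PowerSeries.mk fun n => if j ∣ n then coeff (n / j) T else 0

/-- Truncation (sufficient for the coefficient of `z^N`, since `T` has zero constant
term) of `(z/2)·exp(∑_{j≥1} T(z^j)/j) + (z/2)·exp(∑_{j≥1} (-1)^j T(z^j)/j)
- (z/2)·(T(z)² + T(z²))`. -/
noncomputable def truncRHS (T : PowerSeries ℚ) (N : ℕ) : PowerSeries ℚ :=
  let S₁ : PowerSeries ℚ := ∑ j ∈ Finset.Icc 1 N, ((1 : ℚ) / j) • substPow j T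
  let S₂ : PowerSeries ℚ := ∑ j ∈ Finset.Icc 1 N, ((-1 : ℚ) ^ j / j) • substPow j T
  let E₁ : PowerSeries ℚ := ∑ k ∈ Finset.range (N + 1), ((1 : ℚ) / (Nat.factorial k)) • S₁ ^ k
  let E₂ : PowerSeries ℚ := ∑ k ∈ Finset.range (N + 1), ((1 : ℚ) / (Nat.factorial k)) • S₂ ^ k
  ((1 : ℚ) / 2) • (X * E₁) + ((1 : ℚ) / 2) • (X * E₂)
    - ((1 : ℚ) / 2) • (X * (T ^ 2 + substPow 2 T))

/-- `T` has zero constant term and satisfies the functional equation of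
unordered rooted trees with all outdegrees even and `≥ 4`. -/
def SatisfiesTreeEq (T : PowerSeries ℚ) : Prop :=
  constantCoeff T = 0 ∧ ∀ N : ℕ, coeff N T = coeff N (truncRHS T N)

/-!
The coefficient of `z^N` on the right-hand side involves only the coefficients of `T` below `N`
(everything is multiplied by `z`), so a solution is unique by strong induction.

The substitution `z ↦ -z` (`rescale (-1)`) multiplies `T(z^j)` by `(-1)^j` when `T` is odd, so it
swaps the two exponentials and fixes `T² + T(z²)`: the series multiplied by `z/2` is even, and
inductively every even coefficient of `T` vanishes.

Up to order `5`, `T` agrees with `z` (with `[z^3]T = 0`), and for `T = z` the exponentials are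
`exp(-log(1 ∓ z)) = 1/(1 ∓ z)`, whose even coefficients are all `1`.
-/

lemma sum_Icc_one_eq_sum_range {M : Type*} [AddCommMonoid M] (f : ℕ → M) (N : ℕ) :
    ∑ j ∈ Finset.Icc 1 N, f j = ∑ i ∈ Finset.range N, f (i + 1) := by
  rw [Finset.range_eq_Ico, Finset.sum_Ico_add', ← Finset.Ico_add_one_right_eq_Icc]

section Parity

variable {R : Type*} [CommRing R]

lemma coeff_eq_zero_of_rescale_neg_one_eq_self [IsAddTorsionFree R] {f : R⟦X⟧}
    (hf : rescale (-1) f = f) {n : ℕ} (hn : Odd n) : coeff n f = 0 := by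
  have := congrArg (coeff n) hf
  rwa [coeff_rescale, hn.neg_one_pow, neg_one_mul, neg_eq_self] at this

lemma rescale_neg_one_eq_neg_of_coeff_eq_zero {f : R⟦X⟧}
    (hf : ∀ n, Even n → coeff n f = 0) : rescale (-1) f = -f := by
  ext n
  rw [coeff_rescale, map_neg]
  rcases n.even_or_odd with hn | hn
  · simp [hf n hn]
  · rw [hn.neg_one_pow, neg_one_mul]

end Parity

section ExpTrunc

noncomputable def expTrunc (N : ℕ) (S : ℚ⟦X⟧) : ℚ⟦X⟧ :=
  ∑ k ∈ Finset.range (N + 1), ((1 : ℚ) / k.factorial) • S ^ k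

lemma map_expTrunc (φ : ℚ⟦X⟧ →+* ℚ⟦X⟧) (N : ℕ) (S : ℚ⟦X⟧) :
    φ (expTrunc N S) = expTrunc N (φ S) := by
  simp only [expTrunc, map_sum, map_rat_smul, map_pow]

lemma coeff_zero_expTrunc {S : ℚ⟦X⟧} (hS : constantCoeff S = 0) (N : ℕ) :
    coeff 0 (expTrunc N S) = 1 := by
  simp [expTrunc, Finset.sum_range_succ', hS]

lemma X_pow_dvd_expTrunc_succ_sub {S : ℚ⟦X⟧} (hS : X ∣ S) (N : ℕ) :
    X ^ (N + 1) ∣ expTrunc (N + 1) S - expTrunc N S := by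
  rw [expTrunc, Finset.sum_range_succ, ← expTrunc, add_sub_cancel_left, smul_eq_C_mul]
  exact dvd_mul_of_dvd_right (pow_dvd_pow_of_dvd hS _) _

lemma derivative_expTrunc_succ (S : ℚ⟦X⟧) (N : ℕ) :
    d⁄dX ℚ (expTrunc (N + 1) S) = d⁄dX ℚ S * expTrunc N S := by
  rw [expTrunc, Finset.sum_range_succ', map_add, map_sum, expTrunc, Finset.mul_sum]
  simp only [pow_zero, Derivation.map_smul, Derivation.map_one_eq_zero, smul_zero, add_zero,
    derivative_pow, Nat.add_sub_cancel]
  refine Finset.sum_congr rfl fun k _ => ?_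
  have hfact : ((1 : ℚ) / (k + 1).factorial) * (k + 1 : ℕ) = 1 / k.factorial := by
    rw [Nat.factorial_succ]; push_cast; field_simp
  rw [mul_assoc, ← nsmul_eq_mul, ← Nat.cast_smul_eq_nsmul ℚ, smul_smul, hfact, mul_smul_comm,
    mul_comm]

/-- A truncated form of `(1 - X) f' = f ⟹ f = f(0) / (1 - X)`. -/
lemma coeff_eq_coeff_zero_of_X_pow_dvd {f : ℚ⟦X⟧} {M : ℕ}
    (hf : X ^ M ∣ (1 - X) * d⁄dX ℚ f - f) {n : ℕ} (hn : n ≤ M) : coeff n f = coeff 0 f := by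
  induction n with
  | zero => rfl
  | succ n ih =>
    have h := X_pow_dvd_iff.mp hf n hn
    have hcoeff : coeff n ((1 - X) * d⁄dX ℚ f) = (n + 1) * coeff (n + 1) f - n * coeff n f := by
      rw [sub_mul, one_mul, map_sub, coeff_derivative]
      rcases n with _ | n
      · simp
      · rw [coeff_succ_X_mul, coeff_derivative]; push_cast; ring
    rw [map_sub, hcoeff, sub_eq_zero] at h
    have h' : ((n : ℚ) + 1) * (coeff (n + 1) f - coeff n f) = 0 := by linear_combination h
    rw [← ih (by omega)]
    exact sub_eq_zero.mp ((mul_eq_zero.mp h').resolve_left n.cast_add_one_ne_zero)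

/-- Truncations of `exp (-log (1 - X)) = 1 / (1 - X)`. -/
lemma coeff_expTrunc_sum_X_pow_div {N n : ℕ} (hn : n ≤ N) :
    coeff n (expTrunc N (∑ j ∈ Finset.Icc 1 N, ((1 : ℚ) / j) • X ^ j)) = 1 := by
  set L : ℚ⟦X⟧ := ∑ j ∈ Finset.Icc 1 N, ((1 : ℚ) / j) • X ^ j
  have hL : X ∣ L := Finset.dvd_sum fun j hj => by
    rw [smul_eq_C_mul]
    exact dvd_mul_of_dvd_right
      (dvd_pow_self X (Nat.one_le_iff_ne_zero.mp (Finset.mem_Icc.mp hj).1)) _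
  suffices hE : X ^ N ∣ (1 - X) * d⁄dX ℚ (expTrunc N L) - expTrunc N L by
    rw [coeff_eq_coeff_zero_of_X_pow_dvd hE hn, coeff_zero_expTrunc (X_dvd_iff.mp hL)]
  rcases N with _ | N
  · rw [pow_zero]; exact one_dvd _
  have hdL : (1 - X) * d⁄dX ℚ L = 1 - X ^ (N + 1) := by
    rw [← mul_neg_geom_sum]
    congr 1
    rw [show L = _ from sum_Icc_one_eq_sum_range _ _, map_sum]
    refine Finset.sum_congr rfl fun i _ => ?_
    rw [Derivation.map_smul, derivative_pow, derivative_X, mul_one, Nat.add_sub_cancel,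
      ← nsmul_eq_mul, ← Nat.cast_smul_eq_nsmul ℚ, smul_smul,
      one_div_mul_cancel (Nat.cast_ne_zero.mpr i.succ_ne_zero), one_smul]
  have hE : (1 - X) * d⁄dX ℚ (expTrunc (N + 1) L) - expTrunc (N + 1) L =
      -(X ^ (N + 1) * expTrunc N L) - (expTrunc (N + 1) L - expTrunc N L) := by
    rw [derivative_expTrunc_succ, ← mul_assoc, hdL]; ring
  rw [hE]
  exact dvd_sub (dvd_neg.mpr (dvd_mul_right _ _)) (X_pow_dvd_expTrunc_succ_sub hL N)

end ExpTrunc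

section SubstPow

@[simp]
lemma coeff_substPow (j n : ℕ) (T : ℚ⟦X⟧) :
    coeff n (substPow j T) = if j ∣ n then coeff (n / j) T else 0 :=
  coeff_mk _ _

lemma substPow_neg (j : ℕ) (T : ℚ⟦X⟧) : substPow j (-T) = -substPow j T := by
  ext n
  simp only [coeff_substPow, map_neg]
  split_ifs <;> simp

lemma substPow_X {j : ℕ} (hj : j ≠ 0) : substPow j X = X ^ j := by
  ext n
  rw [coeff_substPow, coeff_X, coeff_X_pow]
  rcases eq_or_ne n j with rfl | hne
  · simp [Nat.div_self (Nat.pos_of_ne_zero hj)]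
  · simp only [hne, if_false, ite_eq_right_iff]
    intro hdvd hdiv
    exact absurd (by rw [← Nat.div_mul_cancel hdvd, hdiv, one_mul]) hne

lemma rescale_substPow (a : ℚ) (j : ℕ) (T : ℚ⟦X⟧) :
    rescale a (substPow j T) = substPow j (rescale (a ^ j) T) := by
  ext n
  simp only [coeff_rescale, coeff_substPow]
  split_ifs with h
  · rw [← pow_mul, Nat.mul_div_cancel' h]
  · rw [mul_zero]

lemma X_pow_dvd_substPow_sub {N : ℕ} {T T' : ℚ⟦X⟧} (h : X ^ N ∣ T - T') (j : ℕ) :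
    X ^ N ∣ substPow j T - substPow j T' := by
  rw [X_pow_dvd_iff] at h ⊢
  intro n hn
  simp only [map_sub, coeff_substPow]
  split_ifs
  · exact h _ ((Nat.div_le_self n j).trans_lt hn)
  · exact sub_self 0

end SubstPow

section TreeKernel

noncomputable def substPowSum (c : ℕ → ℚ) (N : ℕ) (T : ℚ⟦X⟧) : ℚ⟦X⟧ :=
  ∑ j ∈ Finset.Icc 1 N, c j • substPow j T

noncomputable def treeKernel (T : ℚ⟦X⟧) (N : ℕ) : ℚ⟦X⟧ :=
  expTrunc N (substPowSum (fun j => 1 / j) N T)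
    + expTrunc N (substPowSum (fun j => (-1) ^ j / j) N T) - (T ^ 2 + substPow 2 T)

lemma truncRHS_eq_smul_X_mul_treeKernel (T : ℚ⟦X⟧) (N : ℕ) :
    truncRHS T N = (1 / 2 : ℚ) • (X * treeKernel T N) := by
  rw [treeKernel, mul_sub, mul_add, smul_sub, smul_add]
  rfl

lemma substPowSum_X (c : ℕ → ℚ) (N : ℕ) :
    substPowSum c N X = ∑ j ∈ Finset.Icc 1 N, c j • X ^ j :=
  Finset.sum_congr rfl fun j hj => by
    rw [substPow_X (Nat.one_le_iff_ne_zero.mp (Finset.mem_Icc.mp hj).1)]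

lemma rescale_neg_one_substPowSum {U : ℚ⟦X⟧} (hU : rescale (-1) U = -U) (c : ℕ → ℚ) (N : ℕ) :
    rescale (-1) (substPowSum c N U) = substPowSum (fun j => (-1) ^ j * c j) N U := by
  simp only [substPowSum, map_sum, map_rat_smul, rescale_substPow]
  refine Finset.sum_congr rfl fun j _ => ?_
  rcases j.even_or_odd with hj | hj
  · rw [hj.neg_one_pow, rescale_one, RingHom.id_apply, one_mul]
  · rw [hj.neg_one_pow, hU, substPow_neg, smul_neg, neg_one_mul, neg_smul]

lemma rescale_neg_one_expTrunc_substPowSum {U : ℚ⟦X⟧} (hU : rescale (-1) U = -U) (N : ℕ) :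
    rescale (-1) (expTrunc N (substPowSum (fun j => 1 / j) N U))
      = expTrunc N (substPowSum (fun j => (-1) ^ j / j) N U) := by
  rw [map_expTrunc, rescale_neg_one_substPowSum hU]
  simp only [mul_one_div]

lemma rescale_neg_one_treeKernel {U : ℚ⟦X⟧} (hU : rescale (-1) U = -U) (N : ℕ) :
    rescale (-1) (treeKernel U N) = treeKernel U N := by
  rw [treeKernel, ← rescale_neg_one_expTrunc_substPowSum hU, map_sub, map_add, map_add, map_pow,
    hU, neg_sq, rescale_substPow, even_two.neg_one_pow, rescale_one, RingHom.id_apply,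
    rescale_rescale, neg_one_mul, neg_neg, rescale_one, RingHom.id_apply, add_comm (expTrunc _ _)]

lemma coeff_truncRHS_eq_zero_of_rescale {U : ℚ⟦X⟧} (hU : rescale (-1) U = -U) {N : ℕ}
    (hN : Even N) : coeff N (truncRHS U N) = 0 := by
  rw [truncRHS_eq_smul_X_mul_treeKernel, map_smul]
  rcases N with _ | n
  · simp
  · have hn : Odd n := by simpa [Nat.even_add_one] using hN
    rw [coeff_succ_X_mul,
      coeff_eq_zero_of_rescale_neg_one_eq_self (rescale_neg_one_treeKernel hU _) hn, smul_zero]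

lemma coeff_truncRHS_congr {N : ℕ} {T T' : ℚ⟦X⟧} (h : X ^ N ∣ T - T') :
    coeff N (truncRHS T N) = coeff N (truncRHS T' N) := by
  let φ := Ideal.Quotient.mk (Ideal.span {(X : ℚ⟦X⟧) ^ N})
  have hφ : ∀ {f g : ℚ⟦X⟧}, X ^ N ∣ f - g → φ f = φ g := fun hfg =>
    Ideal.Quotient.eq.mpr (Ideal.mem_span_singleton.mpr hfg)
  have hsubst : ∀ j, φ (substPow j T) = φ (substPow j T') := fun j =>
    hφ (X_pow_dvd_substPow_sub h j)
  -- modulo `X ^ N`, `treeKernel T N` is a ring expression in the `substPow j T`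
  have hkernel : φ (treeKernel T N) = φ (treeKernel T' N) := by
    simp only [treeKernel, expTrunc, substPowSum, map_sub, map_add, map_pow, map_sum, map_rat_smul,
      hsubst, hφ h]
  have hdvd : X ^ (N + 1) ∣ X * treeKernel T N - X * treeKernel T' N := by
    rw [pow_succ', ← mul_sub]
    exact mul_dvd_mul_left X (Ideal.mem_span_singleton.mp (Ideal.Quotient.eq.mp hkernel))
  rw [truncRHS_eq_smul_X_mul_treeKernel, truncRHS_eq_smul_X_mul_treeKernel, map_smul, map_smul,
    ← sub_eq_zero, ← smul_sub, ← map_sub, X_pow_dvd_iff.mp hdvd N N.lt_succ_self, smul_zero]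

lemma coeff_succ_truncRHS_X {n : ℕ} (hn : Even n) :
    coeff (n + 1) (truncRHS X (n + 1)) = if n = 2 then 0 else 1 := by
  have hE := coeff_expTrunc_sum_X_pow_div (N := n + 1) n.le_succ
  rw [truncRHS_eq_smul_X_mul_treeKernel, map_smul, coeff_succ_X_mul, treeKernel,
    ← rescale_neg_one_expTrunc_substPowSum rescale_neg_one_X, substPowSum_X]
  simp only [map_sub, map_add, coeff_rescale, hn.neg_one_pow, one_mul, hE,
    substPow_X two_ne_zero, coeff_X_pow]
  split_ifs <;> norm_num

end TreeKernel

namespace SatisfiesTreeEq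

theorem unique {T T' : ℚ⟦X⟧} (hT : SatisfiesTreeEq T) (hT' : SatisfiesTreeEq T') :
    T' = T := by
  ext n
  induction n using Nat.strong_induction_on with
  | _ n ih =>
    rw [hT'.2, hT.2]
    exact coeff_truncRHS_congr (X_pow_dvd_iff.mpr fun m hm => by rw [map_sub, ih m hm, sub_self])

theorem coeff_eq_zero_of_even {T : ℚ⟦X⟧} (hT : SatisfiesTreeEq T) {n : ℕ} (hn : Even n) :
    coeff n T = 0 := by
  induction n using Nat.strong_induction_on with
  | _ n ih =>
    have hdvd : X ^ n ∣ T - (trunc n T : ℚ⟦X⟧) :=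
      ⟨_, sub_eq_iff_eq_add.mpr (eq_X_pow_mul_shift_add_trunc n T)⟩
    have hodd : rescale (-1) (trunc n T : ℚ⟦X⟧) = -(trunc n T : ℚ⟦X⟧) :=
      rescale_neg_one_eq_neg_of_coeff_eq_zero fun m hm => by
        rw [Polynomial.coeff_coe, coeff_trunc]
        split_ifs with h
        exacts [ih m h hm, rfl]
    rw [hT.2, coeff_truncRHS_congr hdvd, coeff_truncRHS_eq_zero_of_rescale hodd hn]

theorem coeff_eq_coeff_truncRHS_X {T : ℚ⟦X⟧} (hT : SatisfiesTreeEq T) {N : ℕ}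
    (h : ∀ m < N, coeff m T = coeff m X) : coeff N T = coeff N (truncRHS X N) :=
  (hT.2 N).trans (coeff_truncRHS_congr (X_pow_dvd_iff.mpr fun m hm => by
    rw [map_sub, h m hm, sub_self]))

end SatisfiesTreeEq

theorem stmt_16 (T : PowerSeries ℚ) (hT : SatisfiesTreeEq T) :
    (∀ T' : PowerSeries ℚ, SatisfiesTreeEq T' → T' = T) ∧
    coeff 1 T = 1 ∧ (∀ n : ℕ, Even n → coeff n T = 0) ∧ coeff 5 T = 1 := by
  have heven : ∀ n : ℕ, Even n → coeff n T = 0 := fun n hn => hT.coeff_eq_zero_of_even hn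
  have h1 : coeff 1 T = 1 := by
    rw [hT.coeff_eq_coeff_truncRHS_X fun m hm => by
      interval_cases m; simp [coeff_X, hT.1]]
    exact coeff_succ_truncRHS_X Even.zero
  have h3 : coeff 3 T = 0 := by
    rw [hT.coeff_eq_coeff_truncRHS_X fun m hm => by
      interval_cases m <;> simp [coeff_X, hT.1, h1, heven 2 even_two]]
    exact coeff_succ_truncRHS_X even_two
  have h5 : coeff 5 T = 1 := by
    rw [hT.coeff_eq_coeff_truncRHS_X fun m hm => by
      interval_cases m <;> simp [coeff_X, hT.1, h1, heven 2 even_two, h3, heven 4 (by decide)]]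
    exact coeff_succ_truncRHS_X (n := 4) (by decide)
  exact ⟨fun T' hT' => hT.unique hT', h1, heven, h5⟩
end
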